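/- Let F : ℝ^d → ℝ be differentiable with L-Lipschitz gradient (L > 0) and F ≥ 0. Let α₀ > 0, β > 0, and let (x_t) be a sequence with x_{t+1} = x_t + η_t·d_t, where ⟨∇F(x_t), d_t⟩ ≤ −α₀·‖∇F(x_t)‖² and ‖d_t‖ ≤ β·‖∇F(x_t)‖ for all t, and η_t = η₀/(1+t)^α with η₀ > 0 and 1/2 < α ≤ 1. Then ‖∇F(x_t)‖ → 0 as t → ∞. -/

import Mathlib

/-!
With steps `η t → 0`, the descent lemma eventually gives
`F (x (t+1)) ≤ F (x t) - (α₀/2) η t ‖∇F (x t)‖²`, so `∑ η t ‖∇F (x t)‖² < ∞` because `F ≥ 0`.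
The Lipschitz gradient gives `‖∇F (x (t+1))‖² ≤ ‖∇F (x t)‖² + C η t ‖∇F (x t)‖²`, a summable
perturbation of a monotone sequence, so `‖∇F (x t)‖²` converges; as `∑ η t = ∞` (this is where
`α ≤ 1` enters), the limit must be `0`.
-/

open Filter RealInnerProductSpace Topology

theorem summable_of_mul_le_sub_succ {f u : ℕ → ℝ} {c : ℝ} (hc : 0 < c) (hf : ∀ t, 0 ≤ f t)
    (hu : ∀ t, 0 ≤ u t) (h : ∀ᶠ t in atTop, c * u t ≤ f t - f (t + 1)) : Summable u := by
  obtain ⟨T, hT⟩ := eventually_atTop.1 h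
  rw [← summable_nat_add_iff T, ← summable_mul_left_iff hc.ne']
  refine summable_of_sum_range_le (c := f T) (fun n => mul_nonneg hc.le (hu _)) fun n => ?_
  calc ∑ i ∈ Finset.range n, c * u (i + T)
      ≤ ∑ i ∈ Finset.range n, (f (T + i) - f (T + i + 1)) :=
        Finset.sum_le_sum fun i _ => by rw [add_comm i T]; exact hT _ (Nat.le_add_right T i)
    _ = f T - f (T + n) := by
        simpa only [add_assoc, add_zero] using Finset.sum_range_sub' (fun i => f (T + i)) n
    _ ≤ f T := sub_le_self _ (hf _)

theorem exists_tendsto_of_le_add_summable {v b : ℕ → ℝ} (hv : ∀ n, 0 ≤ v n) (hb : Summable b)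
    (h : ∀ n, v (n + 1) ≤ v n + b n) : ∃ ℓ, Tendsto v atTop (𝓝 ℓ) := by
  set S : ℕ → ℝ := fun n => ∑ i ∈ Finset.range n, b i
  have hS : Tendsto S atTop (𝓝 (∑' i, b i)) := hb.hasSum.tendsto_sum_nat
  have hanti : Antitone (v - S) := antitone_nat_of_succ_le fun n => by
    simp only [Pi.sub_apply, S, Finset.sum_range_succ]
    linarith [h n]
  obtain ⟨C, hC⟩ := hS.bddAbove_range
  have hbdd : BddBelow (Set.range (v - S)) := ⟨-C, by
    rintro _ ⟨n, rfl⟩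
    linarith [hv n, hC ⟨n, rfl⟩, show (v - S) n = v n - S n from rfl]⟩
  exact ⟨_, by simpa using (tendsto_atTop_ciInf hanti hbdd).add hS⟩

theorem eq_zero_of_tendsto_of_summable_mul {η v : ℕ → ℝ} {ℓ : ℝ} (hv : Tendsto v atTop (𝓝 ℓ))
    (hη : ∀ n, 0 ≤ η n) (hη_div : ¬Summable η) (hsum : Summable fun n => η n * v n) : ℓ = 0 := by
  by_contra hℓ
  have hℓ' : 0 < |ℓ| := abs_pos.2 hℓ
  refine hη_div ((hsum.abs.mul_left (2 / |ℓ|)).of_norm_bounded_eventually_nat ?_)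
  filter_upwards [hv.abs.eventually (lt_mem_nhds (half_lt_self hℓ'))] with n hn
  rw [Real.norm_eq_abs, abs_of_nonneg (hη n), abs_mul, abs_of_nonneg (hη n), div_mul_eq_mul_div,
    le_div_iff₀ hℓ']
  nlinarith [hη n]

theorem tendsto_div_one_add_rpow_atTop (c : ℝ) {α : ℝ} (hα : 0 < α) :
    Tendsto (fun t : ℕ => c / (1 + t : ℝ) ^ α) atTop (𝓝 0) :=
  tendsto_const_nhds.div_atTop <| (tendsto_rpow_atTop hα).comp <|
    tendsto_atTop_add_const_left atTop 1 tendsto_natCast_atTop_atTop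

theorem not_summable_div_one_add_rpow {c α : ℝ} (hc : c ≠ 0) (hα : α ≤ 1) :
    ¬Summable fun t : ℕ => c / (1 + t : ℝ) ^ α := by
  simp_rw [div_eq_mul_one_div c]
  rw [summable_mul_left_iff hc]
  intro h
  have h' : Summable fun n : ℕ => 1 / ((n + 1 : ℕ) : ℝ) ^ α :=
    h.congr fun t => by rw [Nat.cast_succ, add_comm]
  exact hα.not_gt (Real.summable_one_div_nat_rpow.1 ((summable_nat_add_iff 1).1 h'))

section GradientRelated

variable {E : Type*} [NormedAddCommGroup E] [InnerProductSpace ℝ E] [CompleteSpace E]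
  {F : E → ℝ} {L α₀ β : ℝ}

theorem le_add_inner_gradient_add_mul_norm_sq (hF : Differentiable ℝ F) (hL : 0 ≤ L)
    (hLip : ∀ x y, ‖gradient F x - gradient F y‖ ≤ L * ‖x - y‖) (x y : E) :
    F y ≤ F x + ⟪gradient F x, y - x⟫ + L * ‖y - x‖ ^ 2 := by
  have hbound : ∀ z ∈ segment ℝ x y, ‖fderiv ℝ F z - fderiv ℝ F x‖ ≤ L * ‖y - x‖ := fun z hz => by
    rw [← toDual_gradient, ← toDual_gradient, ← map_sub, LinearIsometryEquiv.norm_map]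
    exact (hLip z x).trans (mul_le_mul_of_nonneg_left (norm_sub_le_of_mem_segment hz) hL)
  have hmvt := (convex_segment x y).norm_image_sub_le_of_norm_fderiv_le'
    (fun z _ => hF z) hbound (left_mem_segment ℝ x y) (right_mem_segment ℝ x y)
  rw [← inner_gradient_left, Real.norm_eq_abs] at hmvt
  linarith [le_abs_self (F y - F x - ⟪gradient F x, y - x⟫)]

section Step

variable {x d : E} {η : ℝ}

theorem le_sub_mul_norm_gradient_sq_of_gradient_related (hF : Differentiable ℝ F) (hL : 0 ≤ L)
    (hLip : ∀ x y, ‖gradient F x - gradient F y‖ ≤ L * ‖x - y‖) (hη : 0 ≤ η)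
    (hcorr : ⟪gradient F x, d⟫ ≤ -α₀ * ‖gradient F x‖ ^ 2) (hnorm : ‖d‖ ≤ β * ‖gradient F x‖) :
    F (x + η • d) ≤ F x - (α₀ - L * β ^ 2 * η) * η * ‖gradient F x‖ ^ 2 := by
  have hdescent := le_add_inner_gradient_add_mul_norm_sq hF hL hLip x (x + η • d)
  rw [add_sub_cancel_left, real_inner_smul_right, norm_smul, Real.norm_of_nonneg hη] at hdescent
  have hnorm_sq : ‖d‖ ^ 2 ≤ (β * ‖gradient F x‖) ^ 2 := pow_le_pow_left₀ (norm_nonneg d) hnorm 2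
  have hinner : η * ⟪gradient F x, d⟫ ≤ η * (-α₀ * ‖gradient F x‖ ^ 2) :=
    mul_le_mul_of_nonneg_left hcorr hη
  have hquad : L * (η * ‖d‖) ^ 2 ≤ L * η ^ 2 * (β * ‖gradient F x‖) ^ 2 := by
    rw [mul_pow, ← mul_assoc]; gcongr
  linarith

theorem norm_gradient_add_smul_le (hL : 0 ≤ L)
    (hLip : ∀ x y, ‖gradient F x - gradient F y‖ ≤ L * ‖x - y‖) (hη : 0 ≤ η)
    (hnorm : ‖d‖ ≤ β * ‖gradient F x‖) :
    ‖gradient F (x + η • d)‖ ≤ (1 + L * β * η) * ‖gradient F x‖ :=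
  calc ‖gradient F (x + η • d)‖
      ≤ ‖gradient F x‖ + ‖gradient F (x + η • d) - gradient F x‖ := norm_le_norm_add_norm_sub' _ _
    _ ≤ ‖gradient F x‖ + L * (η * (β * ‖gradient F x‖)) := by
        grw [hLip, add_sub_cancel_left, norm_smul, Real.norm_of_nonneg hη, hnorm]
    _ = (1 + L * β * η) * ‖gradient F x‖ := by ring

end Step

section Iteration

variable {x d : ℕ → E} {η : ℕ → ℝ}

theorem summable_mul_norm_gradient_sq_of_gradient_related (hF : Differentiable ℝ F)
    (hF_nonneg : ∀ y, 0 ≤ F y) (hL : 0 ≤ L)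
    (hLip : ∀ x y, ‖gradient F x - gradient F y‖ ≤ L * ‖x - y‖) (hα₀ : 0 < α₀)
    (hη : ∀ t, 0 ≤ η t) (hη_lim : Tendsto η atTop (𝓝 0)) (hstep : ∀ t, x (t + 1) = x t + η t • d t)
    (hcorr : ∀ t, ⟪gradient F (x t), d t⟫ ≤ -α₀ * ‖gradient F (x t)‖ ^ 2)
    (hnorm : ∀ t, ‖d t‖ ≤ β * ‖gradient F (x t)‖) :
    Summable fun t => η t * ‖gradient F (x t)‖ ^ 2 := by
  have hu : ∀ t, 0 ≤ η t * ‖gradient F (x t)‖ ^ 2 := fun t => mul_nonneg (hη t) (sq_nonneg _)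
  refine summable_of_mul_le_sub_succ (half_pos hα₀) (fun t => hF_nonneg (x t)) hu ?_
  have hlim : Tendsto (fun t => L * β ^ 2 * η t) atTop (𝓝 0) := by
    simpa using hη_lim.const_mul (L * β ^ 2)
  filter_upwards [hlim.eventually (eventually_le_nhds (half_pos hα₀))] with t ht
  have hdescent := le_sub_mul_norm_gradient_sq_of_gradient_related hF hL hLip (hη t) (hcorr t)
    (hnorm t)
  rw [← hstep] at hdescent
  linarith [mul_le_mul_of_nonneg_right ht (hu t)]

theorem exists_tendsto_norm_gradient_sq_of_gradient_related {M : ℝ} (hL : 0 ≤ L)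
    (hLip : ∀ x y, ‖gradient F x - gradient F y‖ ≤ L * ‖x - y‖) (hη : ∀ t, 0 ≤ η t)
    (hη_le : ∀ t, η t ≤ M) (hsum : Summable fun t => η t * ‖gradient F (x t)‖ ^ 2)
    (hstep : ∀ t, x (t + 1) = x t + η t • d t) (hnorm : ∀ t, ‖d t‖ ≤ β * ‖gradient F (x t)‖) :
    ∃ ℓ, Tendsto (fun t => ‖gradient F (x t)‖ ^ 2) atTop (𝓝 ℓ) := by
  set g := fun t => ‖gradient F (x t)‖
  refine exists_tendsto_of_le_add_summable (fun t => sq_nonneg (g t))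
    (hsum.mul_left (2 * L * β + L ^ 2 * β ^ 2 * M)) fun t => ?_
  have hgrowth := norm_gradient_add_smul_le hL hLip (hη t) (hnorm t)
  rw [← hstep] at hgrowth
  calc g (t + 1) ^ 2 ≤ ((1 + L * β * η t) * g t) ^ 2 := by gcongr
    _ = g t ^ 2 + (2 * L * β + L ^ 2 * β ^ 2 * η t) * (η t * g t ^ 2) := by ring
    _ ≤ _ := by gcongr; exacts [mul_nonneg (hη t) (sq_nonneg _), hη_le t]

end Iteration

end GradientRelated

theorem aicl_gradient_norm_tendsto_zero_general
    (dim : ℕ) (F : EuclideanSpace ℝ (Fin dim) → ℝ) (L α₀ β η₀ α : ℝ)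
    (hL : 0 < L) (hα₀ : 0 < α₀)
    (hη₀ : 0 < η₀) (hα₁ : 1 / 2 < α) (hα₂ : α ≤ 1)
    (hF : Differentiable ℝ F) (hF_nonneg : ∀ x, 0 ≤ F x)
    (hLip : ∀ x y, ‖gradient F x - gradient F y‖ ≤ L * ‖x - y‖)
    (x : ℕ → EuclideanSpace ℝ (Fin dim))
    (dvec : ℕ → EuclideanSpace ℝ (Fin dim)) (η : ℕ → ℝ)
    (hη : ∀ t : ℕ, η t = η₀ / ((1 : ℝ) + t) ^ α)
    (hstep : ∀ t, x (t + 1) = x t + η t • dvec t)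
    (hcorr : ∀ t, ⟪gradient F (x t), dvec t⟫ ≤ -α₀ * ‖gradient F (x t)‖ ^ 2)
    (hnorm : ∀ t, ‖dvec t‖ ≤ β * ‖gradient F (x t)‖) :
    Tendsto (fun t => ‖gradient F (x t)‖) atTop (nhds 0) := by
  have hα : 0 < α := by linarith
  have hη_eq : η = fun t : ℕ => η₀ / (1 + t : ℝ) ^ α := funext hη
  have hη_nonneg : ∀ t, 0 ≤ η t := fun t => by rw [hη]; positivity
  have hη_le : ∀ t, η t ≤ η₀ := fun t => by
    rw [hη]; exact div_le_self hη₀.le (Real.one_le_rpow (by simp) hα.le)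
  have hη_lim : Tendsto η atTop (𝓝 0) := hη_eq ▸ tendsto_div_one_add_rpow_atTop η₀ hα
  have hη_div : ¬Summable η := hη_eq ▸ not_summable_div_one_add_rpow hη₀.ne' hα₂
  have hsum := summable_mul_norm_gradient_sq_of_gradient_related hF hF_nonneg hL.le hLip hα₀
    hη_nonneg hη_lim hstep hcorr hnorm
  obtain ⟨ℓ, hℓ⟩ := exists_tendsto_norm_gradient_sq_of_gradient_related hL.le hLip hη_nonneg
    hη_le hsum hstep hnorm
  obtain rfl := eq_zero_of_tendsto_of_summable_mul hℓ hη_nonneg hη_div hsum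
  simpa using hℓ.sqrt

/-- Lemma 5 of the AICL convergence analysis: with `F ≥ 0` differentiable
with `L`-Lipschitz gradient, gradient-related attack directions
(`⟪∇F xₜ, dₜ⟫ ≤ -α₀·‖∇F xₜ‖²`, `‖dₜ‖ ≤ β·‖∇F xₜ‖`), and step sizes
`η t = η₀/(1+t)^α` with `η₀ > 0`, `1/2 < α ≤ 1`, the gradient norms along
the AICL iterates vanish: `‖∇F (x t)‖ → 0`. -/
theorem aicl_gradient_norm_tendsto_zero
    (dim : ℕ) (F : EuclideanSpace ℝ (Fin dim) → ℝ) (L α₀ β η₀ α : ℝ)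
    (hL : 0 < L) (hα₀ : 0 < α₀) (hβ : 0 < β)
    (hη₀ : 0 < η₀) (hα₁ : 1 / 2 < α) (hα₂ : α ≤ 1)
    (hF : Differentiable ℝ F) (hF_nonneg : ∀ x, 0 ≤ F x)
    (hLip : ∀ x y, ‖gradient F x - gradient F y‖ ≤ L * ‖x - y‖)
    (x : ℕ → EuclideanSpace ℝ (Fin dim))
    (dvec : ℕ → EuclideanSpace ℝ (Fin dim)) (η : ℕ → ℝ)
    (hη : ∀ t : ℕ, η t = η₀ / ((1 : ℝ) + t) ^ α)
    (hstep : ∀ t, x (t + 1) = x t + η t • dvec t)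
    (hcorr : ∀ t, ⟪gradient F (x t), dvec t⟫ ≤ -α₀ * ‖gradient F (x t)‖ ^ 2)
    (hnorm : ∀ t, ‖dvec t‖ ≤ β * ‖gradient F (x t)‖) :
    Tendsto (fun t => ‖gradient F (x t)‖) atTop (nhds 0) :=
  aicl_gradient_norm_tendsto_zero_general dim F L α₀ β η₀ α hL hα₀ hη₀ hα₁ hα₂ hF hF_nonneg hLip x
    dvec η hη hstep hcorr hnorm
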